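/- Let C be a bivariate copula admitting a tail dependence function Λ, let λ(C) = Λ(1,1) be its tail dependence coefficient, and let μ be a tail generating measure. Set a(μ) = (∫ max(u,v) dμ)/(∫ min(u,v) dμ). Then a(μ) ≥ 1 and λ(C) ≤ λ_μ(C) ≤ min(1, a(μ)·λ(C)). Consequently, the infimum of λ_μ(C) over all tail generating measures μ equals λ(C). -/

import Mathlib

/-!
A copula is 1-Lipschitz in each variable, monotone and bounded by `min`; these properties pass to
the tail dependence function `Λ`, which is moreover positively homogeneous. Hence on `[0,1]²`
`min(u,v) λ = Λ(m,m) ≤ Λ(u,v) ≤ Λ(M,M) = max(u,v) λ` with `m = min(u,v)`, `M = max(u,v)`, and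
`Λ ≤ min`; integrating against `μ` gives the inequalities (the Lipschitz bound makes `Λ`
continuous, hence `μ`-integrable). The Dirac mass at `(1,1)` attains
`λ_μ = λ`, so the lower bound is the infimum.
-/

open MeasureTheory Filter Set

/-- A bivariate copula: `C : [0,1]² → [0,1]` with the grounded/marginal conditions and
the 2-increasing property. -/
def IsCopula (C : ℝ → ℝ → ℝ) : Prop :=
  (∀ u ∈ Icc (0:ℝ) 1, ∀ v ∈ Icc (0:ℝ) 1, C u v ∈ Icc (0:ℝ) 1) ∧
  (∀ u ∈ Icc (0:ℝ) 1, C u 0 = 0 ∧ C 0 u = 0 ∧ C u 1 = u ∧ C 1 u = u) ∧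
  (∀ u u' v v' : ℝ, u ∈ Icc (0:ℝ) 1 → u' ∈ Icc (0:ℝ) 1 →
    v ∈ Icc (0:ℝ) 1 → v' ∈ Icc (0:ℝ) 1 → u ≤ u' → v ≤ v' →
    0 ≤ C u' v' - C u' v - C u v' + C u v)

/-- `Λ` is the tail dependence function of `C`:
`Λ(u,v) = lim_{p↓0} C(pu,pv)/p` for every `(u,v) ∈ [0,∞)²`. -/
def HasTDF (C Λ : ℝ → ℝ → ℝ) : Prop :=
  ∀ u v : ℝ, 0 ≤ u → 0 ≤ v →
    Tendsto (fun p : ℝ => C (p * u) (p * v) / p)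
      (nhdsWithin (0:ℝ) (Ioi 0)) (nhds (Λ u v))

/-- A tail generating measure: a Borel probability measure on `[0,1]²` whose mass is not
concentrated on `{u = 0} ∪ {v = 0}`. -/
def IsTailGenMeasure (μ : Measure (ℝ × ℝ)) : Prop :=
  IsProbabilityMeasure μ ∧
  μ ((Icc (0:ℝ) 1 ×ˢ Icc (0:ℝ) 1)ᶜ) = 0 ∧
  μ {q : ℝ × ℝ | q.1 = 0 ∨ q.2 = 0} < 1

/-- The μ-tail dependence measure: `λ_μ = (∫ Λ dμ) / (∫ min dμ)`, applied to
the tail dependence function `Λ` of the copula. -/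
noncomputable def tdm (Λ : ℝ → ℝ → ℝ) (μ : Measure (ℝ × ℝ)) : ℝ :=
  (∫ q, Λ q.1 q.2 ∂μ) / (∫ q : ℝ × ℝ, min q.1 q.2 ∂μ)

open Topology

namespace IsCopula

variable {C : ℝ → ℝ → ℝ} (hC : IsCopula C) {u u' v v' : ℝ}
include hC

lemma sub_mem_Icc_left (hu : u ∈ Icc (0:ℝ) 1) (hu' : u' ∈ Icc (0:ℝ) 1) (hv : v ∈ Icc (0:ℝ) 1)
    (h : u ≤ u') : C u' v - C u v ∈ Icc 0 (u' - u) := by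
  have h0 := hC.2.2 u u' 0 v hu hu' ⟨le_rfl, zero_le_one⟩ hv h hv.1
  have h1 := hC.2.2 u u' v 1 hu hu' hv ⟨zero_le_one, le_rfl⟩ h hv.2
  obtain ⟨hu0, -, hu1, -⟩ := hC.2.1 u hu
  obtain ⟨hu'0, -, hu'1, -⟩ := hC.2.1 u' hu'
  constructor <;> linarith

lemma sub_mem_Icc_right (hu : u ∈ Icc (0:ℝ) 1) (hv : v ∈ Icc (0:ℝ) 1) (hv' : v' ∈ Icc (0:ℝ) 1)
    (h : v ≤ v') : C u v' - C u v ∈ Icc 0 (v' - v) := by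
  have h0 := hC.2.2 0 u v v' ⟨le_rfl, zero_le_one⟩ hu hv hv' hu.1 h
  have h1 := hC.2.2 u 1 v v' hu ⟨zero_le_one, le_rfl⟩ hv hv' hu.2 h
  obtain ⟨-, hv0, -, hv1⟩ := hC.2.1 v hv
  obtain ⟨-, hv'0, -, hv'1⟩ := hC.2.1 v' hv'
  constructor <;> linarith

lemma mono (hu : u ∈ Icc (0:ℝ) 1) (hu' : u' ∈ Icc (0:ℝ) 1) (hv : v ∈ Icc (0:ℝ) 1)
    (hv' : v' ∈ Icc (0:ℝ) 1) (h₁ : u ≤ u') (h₂ : v ≤ v') : C u v ≤ C u' v' := by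
  have := (hC.sub_mem_Icc_left hu hu' hv h₁).1
  have := (hC.sub_mem_Icc_right hu' hv hv' h₂).1
  linarith

lemma le_min (hu : u ∈ Icc (0:ℝ) 1) (hv : v ∈ Icc (0:ℝ) 1) : C u v ≤ min u v := by
  have hCu := hC.mono hu hu hv ⟨zero_le_one, le_rfl⟩ le_rfl hv.2
  have hCv := hC.mono hu ⟨zero_le_one, le_rfl⟩ hv hv hu.2 le_rfl
  rw [(hC.2.1 u hu).2.2.1] at hCu
  rw [(hC.2.1 v hv).2.2.2] at hCv
  exact _root_.le_min hCu hCv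

lemma abs_sub_le (hu : u ∈ Icc (0:ℝ) 1) (hu' : u' ∈ Icc (0:ℝ) 1) (hv : v ∈ Icc (0:ℝ) 1)
    (hv' : v' ∈ Icc (0:ℝ) 1) : |C u v - C u' v'| ≤ |u - u'| + |v - v'| := by
  have left : |C u v - C u' v| ≤ |u - u'| := by
    rcases le_total u u' with h | h
    · have hI := hC.sub_mem_Icc_left hu hu' hv h
      rw [abs_sub_comm, abs_sub_comm u]
      exact abs_le_abs_of_nonneg hI.1 hI.2
    · have hI := hC.sub_mem_Icc_left hu' hu hv h
      exact abs_le_abs_of_nonneg hI.1 hI.2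
  have right : |C u' v - C u' v'| ≤ |v - v'| := by
    rcases le_total v v' with h | h
    · have hI := hC.sub_mem_Icc_right hu' hv hv' h
      rw [abs_sub_comm, abs_sub_comm v]
      exact abs_le_abs_of_nonneg hI.1 hI.2
    · have hI := hC.sub_mem_Icc_right hu' hv' hv h
      exact abs_le_abs_of_nonneg hI.1 hI.2
  calc |C u v - C u' v'| ≤ |C u v - C u' v| + |C u' v - C u' v'| := _root_.abs_sub_le _ _ _
    _ ≤ |u - u'| + |v - v'| := add_le_add left right

end IsCopula

lemma eventually_mul_mem_Icc {x : ℝ} (hx : 0 ≤ x) :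
    ∀ᶠ p in 𝓝[>] (0:ℝ), p * x ∈ Icc (0:ℝ) 1 := by
  have hlim : Tendsto (fun p : ℝ => p * x) (𝓝[>] 0) (𝓝 0) := by
    simpa using ((continuous_mul_const x).tendsto 0).mono_left nhdsWithin_le_nhds
  filter_upwards [hlim (Iio_mem_nhds one_pos), self_mem_nhdsWithin] with p h1 (h0 : 0 < p)
  exact ⟨mul_nonneg h0.le hx, le_of_lt h1⟩

namespace HasTDF

variable {C Λ : ℝ → ℝ → ℝ} (hΛ : HasTDF C Λ) {u u' v v' : ℝ}
include hΛ

lemma apply_zero_zero (hC : IsCopula C) : Λ 0 0 = 0 := by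
  refine tendsto_nhds_unique (hΛ 0 0 le_rfl le_rfl) ?_
  simp [(hC.2.1 0 ⟨le_rfl, zero_le_one⟩).1]

lemma apply_mul_mul (hC : IsCopula C) {t : ℝ} (ht : 0 ≤ t) (hu : 0 ≤ u) (hv : 0 ≤ v) :
    Λ (t * u) (t * v) = t * Λ u v := by
  rcases ht.eq_or_lt with rfl | ht
  · simpa using hΛ.apply_zero_zero hC
  have hscale : Tendsto (t * ·) (𝓝[>] (0:ℝ)) (𝓝[>] 0) :=
    tendsto_comap.mono_left (comap_mulLeft_nhdsGT_zero ht).ge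
  have hrescale : ∀ p : ℝ,
      t * (C ((t * p) * u) ((t * p) * v) / (t * p)) = C (p * (t * u)) (p * (t * v)) / p := by
    intro p
    rw [← mul_div_assoc, mul_div_mul_left _ _ ht.ne', mul_comm t p, mul_assoc, mul_assoc]
  refine tendsto_nhds_unique (hΛ _ _ (mul_nonneg ht.le hu) (mul_nonneg ht.le hv)) ?_
  simpa only [Function.comp_def, hrescale] using ((hΛ u v hu hv).comp hscale).const_mul t

lemma apply_self (hC : IsCopula C) {t : ℝ} (ht : 0 ≤ t) : Λ t t = t * Λ 1 1 := by
  simpa using hΛ.apply_mul_mul hC ht zero_le_one zero_le_one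

lemma le_min (hC : IsCopula C) (hu : 0 ≤ u) (hv : 0 ≤ v) : Λ u v ≤ min u v := by
  refine le_of_tendsto (hΛ u v hu hv) ?_
  filter_upwards [eventually_mul_mem_Icc hu, eventually_mul_mem_Icc hv, self_mem_nhdsWithin]
    with p hpu hpv (hp : 0 < p)
  rw [div_le_iff₀ hp, mul_comm (min u v), mul_min_of_nonneg _ _ hp.le]
  exact hC.le_min hpu hpv

lemma mono (hC : IsCopula C) (hu : 0 ≤ u) (hv : 0 ≤ v) (h₁ : u ≤ u') (h₂ : v ≤ v') :
    Λ u v ≤ Λ u' v' := by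
  have hu' := hu.trans h₁
  have hv' := hv.trans h₂
  refine le_of_tendsto_of_tendsto (hΛ u v hu hv) (hΛ u' v' hu' hv') ?_
  filter_upwards [eventually_mul_mem_Icc hu, eventually_mul_mem_Icc hu',
    eventually_mul_mem_Icc hv, eventually_mul_mem_Icc hv', self_mem_nhdsWithin]
    with p hpu hpu' hpv hpv' (hp : 0 < p)
  exact div_le_div_of_nonneg_right
    (hC.mono hpu hpu' hpv hpv' (by nlinarith) (by nlinarith)) hp.le

lemma abs_sub_le (hC : IsCopula C) (hu : 0 ≤ u) (hu' : 0 ≤ u') (hv : 0 ≤ v) (hv' : 0 ≤ v') :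
    |Λ u v - Λ u' v'| ≤ |u - u'| + |v - v'| := by
  refine le_of_tendsto (((hΛ u v hu hv).sub (hΛ u' v' hu' hv')).abs) ?_
  filter_upwards [eventually_mul_mem_Icc hu, eventually_mul_mem_Icc hu',
    eventually_mul_mem_Icc hv, eventually_mul_mem_Icc hv', self_mem_nhdsWithin]
    with p hpu hpu' hpv hpv' (hp : 0 < p)
  have key := hC.abs_sub_le hpu hpu' hpv hpv'
  rw [← mul_sub, ← mul_sub, abs_mul, abs_mul, abs_of_pos hp, ← mul_add] at key
  rw [div_sub_div_same, abs_div, abs_of_pos hp]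
  exact (div_le_iff₀' hp).mpr key

lemma lipschitzOnWith (hC : IsCopula C) :
    LipschitzOnWith 2 (fun q : ℝ × ℝ => Λ q.1 q.2) (Ici 0 ×ˢ Ici 0) := by
  refine LipschitzOnWith.of_dist_le_mul fun q hq q' hq' => ?_
  have h₁ : |q.1 - q'.1| ≤ dist q q' := by
    rw [Prod.dist_eq, ← Real.dist_eq]; exact le_max_left _ _
  have h₂ : |q.2 - q'.2| ≤ dist q q' := by
    rw [Prod.dist_eq, ← Real.dist_eq]; exact le_max_right _ _
  have := hΛ.abs_sub_le hC hq.1 hq'.1 hq.2 hq'.2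
  rw [Real.dist_eq]
  push_cast
  linarith

lemma min_mul_le (hC : IsCopula C) (hu : 0 ≤ u) (hv : 0 ≤ v) : min u v * Λ 1 1 ≤ Λ u v := by
  have hm : 0 ≤ min u v := _root_.le_min hu hv
  calc min u v * Λ 1 1 = Λ (min u v) (min u v) := (hΛ.apply_self hC hm).symm
    _ ≤ Λ u v := hΛ.mono hC hm hm (min_le_left u v) (min_le_right u v)

lemma le_max_mul (hC : IsCopula C) (hu : 0 ≤ u) (hv : 0 ≤ v) : Λ u v ≤ max u v * Λ 1 1 := by
  have hM : 0 ≤ max u v := le_max_of_le_left hu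
  calc Λ u v ≤ Λ (max u v) (max u v) := hΛ.mono hC hu hv (le_max_left u v) (le_max_right u v)
    _ = max u v * Λ 1 1 := hΛ.apply_self hC hM

end HasTDF

namespace IsTailGenMeasure

variable {μ : Measure (ℝ × ℝ)} (hμ : IsTailGenMeasure μ)
include hμ

lemma ae_mem : ∀ᵐ q ∂μ, q ∈ Icc (0:ℝ) 1 ×ˢ Icc (0:ℝ) 1 := mem_ae_iff.mpr hμ.2.1

lemma integrable_of_continuousOn {f : ℝ × ℝ → ℝ}
    (hf : ContinuousOn f (Icc (0:ℝ) 1 ×ˢ Icc (0:ℝ) 1)) : Integrable f μ := by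
  have := hμ.1
  rw [← Measure.restrict_eq_self_of_ae_mem hμ.ae_mem]
  exact hf.integrableOn_compact (isCompact_Icc.prod isCompact_Icc)

lemma integrable_min : Integrable (fun q : ℝ × ℝ => min q.1 q.2) μ :=
  hμ.integrable_of_continuousOn (continuous_fst.min continuous_snd).continuousOn

lemma integrable_max : Integrable (fun q : ℝ × ℝ => max q.1 q.2) μ :=
  hμ.integrable_of_continuousOn (continuous_fst.max continuous_snd).continuousOn

lemma integral_min_pos : 0 < ∫ q : ℝ × ℝ, min q.1 q.2 ∂μ := by
  have := hμ.1
  have hnonneg : 0 ≤ᵐ[μ] fun q : ℝ × ℝ => min q.1 q.2 := by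
    filter_upwards [hμ.ae_mem] with q hq using le_min hq.1.1 hq.2.1
  refine (integral_nonneg_of_ae hnonneg).lt_of_ne fun hzero => ?_
  have hzero_ae := (integral_eq_zero_iff_of_nonneg_ae hnonneg hμ.integrable_min).mp hzero.symm
  have hcompl : μ {q : ℝ × ℝ | q.1 = 0 ∨ q.2 = 0}ᶜ = 0 := by
    refine mem_ae_iff.mp ?_
    filter_upwards [hzero_ae] with q (hq : min q.1 q.2 = 0)
    rcases min_choice q.1 q.2 with h | h <;> simp_all
  have := measure_univ_le_add_compl (μ := μ) {q : ℝ × ℝ | q.1 = 0 ∨ q.2 = 0}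
  rw [measure_univ, hcompl, add_zero] at this
  exact this.not_gt hμ.2.2

lemma integral_min_le_integral_max :
    ∫ q : ℝ × ℝ, min q.1 q.2 ∂μ ≤ ∫ q : ℝ × ℝ, max q.1 q.2 ∂μ :=
  integral_mono hμ.integrable_min hμ.integrable_max fun _ => min_le_max

end IsTailGenMeasure

section TailDependenceMeasure

variable {C Λ : ℝ → ℝ → ℝ} (hC : IsCopula C) (hΛ : HasTDF C Λ)
  {μ : Measure (ℝ × ℝ)} (hμ : IsTailGenMeasure μ)
include hC hΛ hμ

lemma integrable_tdf : Integrable (fun q : ℝ × ℝ => Λ q.1 q.2) μ :=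
  hμ.integrable_of_continuousOn ((hΛ.lipschitzOnWith hC).continuousOn.mono
    (prod_mono Icc_subset_Ici_self Icc_subset_Ici_self))

lemma integral_min_mul_le_integral_tdf :
    (∫ q : ℝ × ℝ, min q.1 q.2 ∂μ) * Λ 1 1 ≤ ∫ q : ℝ × ℝ, Λ q.1 q.2 ∂μ := by
  rw [← integral_mul_const]
  refine integral_mono_ae (hμ.integrable_min.mul_const _) (integrable_tdf hC hΛ hμ) ?_
  filter_upwards [hμ.ae_mem] with q hq using hΛ.min_mul_le hC hq.1.1 hq.2.1

lemma integral_tdf_le_integral_min :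
    ∫ q : ℝ × ℝ, Λ q.1 q.2 ∂μ ≤ ∫ q : ℝ × ℝ, min q.1 q.2 ∂μ := by
  refine integral_mono_ae (integrable_tdf hC hΛ hμ) hμ.integrable_min ?_
  filter_upwards [hμ.ae_mem] with q hq using hΛ.le_min hC hq.1.1 hq.2.1

lemma integral_tdf_le_integral_max_mul :
    ∫ q : ℝ × ℝ, Λ q.1 q.2 ∂μ ≤ (∫ q : ℝ × ℝ, max q.1 q.2 ∂μ) * Λ 1 1 := by
  rw [← integral_mul_const]
  refine integral_mono_ae (integrable_tdf hC hΛ hμ) (hμ.integrable_max.mul_const _) ?_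
  filter_upwards [hμ.ae_mem] with q hq using hΛ.le_max_mul hC hq.1.1 hq.2.1

lemma le_tdm : Λ 1 1 ≤ tdm Λ μ :=
  (le_div_iff₀ hμ.integral_min_pos).mpr <| by
    simpa only [mul_comm] using integral_min_mul_le_integral_tdf hC hΛ hμ

lemma tdm_le_one : tdm Λ μ ≤ 1 :=
  (div_le_one hμ.integral_min_pos).mpr (integral_tdf_le_integral_min hC hΛ hμ)

lemma tdm_le_div_mul :
    tdm Λ μ ≤ ((∫ q : ℝ × ℝ, max q.1 q.2 ∂μ) / (∫ q : ℝ × ℝ, min q.1 q.2 ∂μ)) * Λ 1 1 := by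
  rw [div_mul_eq_mul_div]
  exact div_le_div_of_nonneg_right (integral_tdf_le_integral_max_mul hC hΛ hμ)
    hμ.integral_min_pos.le

end TailDependenceMeasure

lemma isTailGenMeasure_dirac {a b : ℝ} (ha : a ∈ Ioc (0:ℝ) 1) (hb : b ∈ Ioc (0:ℝ) 1) :
    IsTailGenMeasure (Measure.dirac (a, b)) := by
  refine ⟨inferInstance, ?_, ?_⟩
  · rw [Measure.dirac_apply, indicator_of_notMem]
    exact not_not_intro ⟨Ioc_subset_Icc_self ha, Ioc_subset_Icc_self hb⟩
  · rw [Measure.dirac_apply, indicator_of_notMem (by simp [ha.1.ne', hb.1.ne'])]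
    exact zero_lt_one

lemma tdm_dirac (Λ : ℝ → ℝ → ℝ) (a b : ℝ) : tdm Λ (Measure.dirac (a, b)) = Λ a b / min a b := by
  simp only [tdm, integral_dirac]

theorem tdm_tdc_inequalities (C Λ : ℝ → ℝ → ℝ)
    (hC : IsCopula C) (hΛ : HasTDF C Λ)
    (μ : Measure (ℝ × ℝ)) (hμ : IsTailGenMeasure μ) :
    (1 ≤ (∫ q : ℝ × ℝ, max q.1 q.2 ∂μ) / (∫ q : ℝ × ℝ, min q.1 q.2 ∂μ)) ∧
    (Λ 1 1 ≤ tdm Λ μ ∧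
      tdm Λ μ ≤ min 1 (((∫ q : ℝ × ℝ, max q.1 q.2 ∂μ) / (∫ q : ℝ × ℝ, min q.1 q.2 ∂μ)) * Λ 1 1)) ∧
    sInf {x : ℝ | ∃ ν : Measure (ℝ × ℝ), IsTailGenMeasure ν ∧ x = tdm Λ ν} = Λ 1 1 := by
  have hdirac : IsTailGenMeasure (Measure.dirac ((1:ℝ), (1:ℝ))) :=
    isTailGenMeasure_dirac ⟨one_pos, le_rfl⟩ ⟨one_pos, le_rfl⟩
  have hleast : IsLeast {x : ℝ | ∃ ν : Measure (ℝ × ℝ), IsTailGenMeasure ν ∧ x = tdm Λ ν}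
      (Λ 1 1) := by
    refine ⟨⟨_, hdirac, by simp [tdm_dirac]⟩, ?_⟩
    rintro _ ⟨ν, hν, rfl⟩
    exact le_tdm hC hΛ hν
  exact ⟨(one_le_div hμ.integral_min_pos).mpr hμ.integral_min_le_integral_max,
    ⟨le_tdm hC hΛ hμ, le_min (tdm_le_one hC hΛ hμ) (tdm_le_div_mul hC hΛ hμ)⟩, hleast.csInf_eq⟩
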